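/- arXiv:2210.16452 — 4 statements merged into one kernel-verified Lean document; each statement's English description precedes it below -/
import Mathlib

section
/- Over 𝔽 = ℤ/2ℤ, consider the two-step complex for Reidemeister move R2: objects X = A^{⊗s} ⊕ (A^{⊗(s+1)} ⊕ A^{⊗r}) ⊕ A^{⊗s} in homological degrees 0, 1, 2 with differentials d⁰ = (d_{A⁺}, d_{=∥})ᵀ and d¹ = (d_{B⁻}, d_{∥=}). Assume the relations d_{B⁻} ∘ d_{A⁺} = d_{∥=} ∘ d_{=∥}, cap ∘ d_{A⁺} = id, d_{B⁻} ∘ cup = id, cap ∘ cup = 0, and the 4-tube relation d_{A⁺} ∘ cap + cup ∘ d_{∥=} ∘ d_{=∥} ∘ cap + cup ∘ d_{B⁻} = id. Then F¹ = (cup ∘ d_{∥=}, id)ᵀ: A^{⊗r} → A^{⊗(s+1)} ⊕ A^{⊗r} and G¹ = (d_{=∥} ∘ cap, id) define chain maps between this complex and the one-term complex A^{⊗r} (in degree 1), satisfying d¹ ∘ F¹ = 0, G¹ ∘ d⁰ = 0, G¹ ∘ F¹ = id, and with H¹ = (cap, 0), H² = (cup, 0)ᵀ one has H¹ ∘ d⁰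 = id, d¹ ∘ H² = id, d⁰ ∘ H¹ + F¹ ∘ G¹ + H² ∘ d¹ = id, and H¹ ∘ F¹ = 0 (so G is a strong deformation retraction). -/
/-! Multiplying out the block matrices, every identity is one of the relations read blockwise,
the surplus terms cancelling in pairs since `x + x = 0` over `𝔽₂`: `d¹F¹ = dB cup dPar + dPar` and
`G¹d⁰ = dEq cap dA + dEq` vanish by `dB cup = id` and `cap dA = id`; `G¹F¹ - id` and `H¹F¹` are
`cap cup = 0` in disguise; and the `S1 → S1` block of `d⁰H¹ + F¹G¹ + H²d¹` is the 4-tube relation,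
its `R → S1` block being `cup dPar + cup dPar = 0`. -/

theorem R2_strong_deformation_retraction_general
    {S S1 R : Type*} [AddCommGroup S] [Module (ZMod 2) S]
    [AddCommGroup S1] [Module (ZMod 2) S1] [AddCommGroup R] [Module (ZMod 2) R]
    (cup : S →ₗ[ZMod 2] S1) (cap : S1 →ₗ[ZMod 2] S)
    (dA : S →ₗ[ZMod 2] S1) (dB : S1 →ₗ[ZMod 2] S)
    (dEq : S →ₗ[ZMod 2] R) (dPar : R →ₗ[ZMod 2] S)
    (hcapA : cap ∘ₗ dA = LinearMap.id)
    (hBcup : dB ∘ₗ cup = LinearMap.id)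
    (hsphere : cap ∘ₗ cup = 0)
    (h4tube : dA ∘ₗ cap + cup ∘ₗ dPar ∘ₗ dEq ∘ₗ cap + cup ∘ₗ dB = LinearMap.id) :
    let d0 : S →ₗ[ZMod 2] S1 × R := LinearMap.prod dA dEq
    let d1 : S1 × R →ₗ[ZMod 2] S :=
      dB ∘ₗ LinearMap.fst (ZMod 2) S1 R + dPar ∘ₗ LinearMap.snd (ZMod 2) S1 R
    let F1 : R →ₗ[ZMod 2] S1 × R := LinearMap.prod (cup ∘ₗ dPar) LinearMap.id
    let G1 : S1 × R →ₗ[ZMod 2] R :=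
      dEq ∘ₗ cap ∘ₗ LinearMap.fst (ZMod 2) S1 R + LinearMap.snd (ZMod 2) S1 R
    let H1 : S1 × R →ₗ[ZMod 2] S := cap ∘ₗ LinearMap.fst (ZMod 2) S1 R
    let H2 : S →ₗ[ZMod 2] S1 × R := LinearMap.prod cup 0
    (d1 ∘ₗ F1 = 0) ∧ (G1 ∘ₗ d0 = 0) ∧ (G1 ∘ₗ F1 = LinearMap.id) ∧
      (H1 ∘ₗ d0 = LinearMap.id) ∧ (d1 ∘ₗ H2 = LinearMap.id) ∧
      (d0 ∘ₗ H1 + F1 ∘ₗ G1 + H2 ∘ₗ d1 = LinearMap.id) ∧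
      (H1 ∘ₗ F1 = 0) := by
  intro d0 d1 F1 G1 H1 H2
  rw [LinearMap.ext_iff] at hcapA hBcup hsphere h4tube
  simp only [LinearMap.comp_apply, LinearMap.add_apply, LinearMap.id_apply,
    LinearMap.zero_apply] at hcapA hBcup hsphere h4tube
  refine ⟨?_, ?_, ?_, ?_, ?_, ?_, ?_⟩ <;> ext <;>
    simp [d0, d1, F1, G1, H1, H2, hcapA, hBcup, hsphere, h4tube, ZModModule.add_self]

/-- Reidemeister move R2: given the Bar-Natan relations as hypotheses, the maps
F¹ = (cup∘d_{∥=}, id), G¹ = (d_{=∥}∘cap, id), H¹ = (cap, 0), H² = (cup, 0) exhibit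
the two-step R2 complex A^{⊗s} → A^{⊗(s+1)} ⊕ A^{⊗r} → A^{⊗s} (over 𝔽₂, the
middle spaces `S1 × R`) as strongly deformation retracting onto the one-term
complex A^{⊗r} in degree 1. Here S, S1, R stand for the tensor powers A^{⊗s},
A^{⊗(s+1)}, A^{⊗r}. -/
theorem R2_strong_deformation_retraction
    {S S1 R : Type*} [AddCommGroup S] [Module (ZMod 2) S]
    [AddCommGroup S1] [Module (ZMod 2) S1] [AddCommGroup R] [Module (ZMod 2) R]
    (cup : S →ₗ[ZMod 2] S1) (cap : S1 →ₗ[ZMod 2] S)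
    (dA : S →ₗ[ZMod 2] S1) (dB : S1 →ₗ[ZMod 2] S)
    (dEq : S →ₗ[ZMod 2] R) (dPar : R →ₗ[ZMod 2] S)
    (hiso : dB ∘ₗ dA = dPar ∘ₗ dEq)
    (hcapA : cap ∘ₗ dA = LinearMap.id)
    (hBcup : dB ∘ₗ cup = LinearMap.id)
    (hsphere : cap ∘ₗ cup = 0)
    (h4tube : dA ∘ₗ cap + cup ∘ₗ dPar ∘ₗ dEq ∘ₗ cap + cup ∘ₗ dB = LinearMap.id) :
    let d0 : S →ₗ[ZMod 2] S1 × R := LinearMap.prod dA dEq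
    let d1 : S1 × R →ₗ[ZMod 2] S :=
      dB ∘ₗ LinearMap.fst (ZMod 2) S1 R + dPar ∘ₗ LinearMap.snd (ZMod 2) S1 R
    let F1 : R →ₗ[ZMod 2] S1 × R := LinearMap.prod (cup ∘ₗ dPar) LinearMap.id
    let G1 : S1 × R →ₗ[ZMod 2] R :=
      dEq ∘ₗ cap ∘ₗ LinearMap.fst (ZMod 2) S1 R + LinearMap.snd (ZMod 2) S1 R
    let H1 : S1 × R →ₗ[ZMod 2] S := cap ∘ₗ LinearMap.fst (ZMod 2) S1 R
    let H2 : S →ₗ[ZMod 2] S1 × R := LinearMap.prod cup 0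
    (d1 ∘ₗ F1 = 0) ∧ (G1 ∘ₗ d0 = 0) ∧ (G1 ∘ₗ F1 = LinearMap.id) ∧
      (H1 ∘ₗ d0 = LinearMap.id) ∧ (d1 ∘ₗ H2 = LinearMap.id) ∧
      (d0 ∘ₗ H1 + F1 ∘ₗ G1 + H2 ∘ₗ d1 = LinearMap.id) ∧
      (H1 ∘ₗ F1 = 0) :=
  R2_strong_deformation_retraction_general cup cap dA dB dEq dPar hcapA hBcup hsphere h4tube
end

section
/- In a group generated by elements a, A, b, B subject to the relations a b̄ a = b̄ a b̄ (where b̄ = b⁻¹), A b̄ A = b̄ A b̄, aA = Aa, (b̄ a A)⁴ = 1, and ā B a = Ā b A, the elements b and B commute: bB = Bb. -/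
/-- In any group with elements a, A, b, B satisfying the relations of the pure
mapping class group PMCG₂(T²): a b⁻¹ a = b⁻¹ a b⁻¹, A b⁻¹ A = b⁻¹ A b⁻¹,
aA = Aa, (b⁻¹ a A)⁴ = 1, and a⁻¹ B a = A⁻¹ b A, the elements b and B commute. -/
theorem pmcg_b_B_commute {G : Type*} [Group G] (a A b B : G)
    (r1 : a * b⁻¹ * a = b⁻¹ * a * b⁻¹)
    (r2 : A * b⁻¹ * A = b⁻¹ * A * b⁻¹)
    (r3 : a * A = A * a)
    (r4 : (b⁻¹ * a * A) ^ 4 = 1)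
    (r5 : a⁻¹ * B * a = A⁻¹ * b * A) :
    b * B = B * b := by
  -- inverted braid relations
  have r1' : a⁻¹ * b * a⁻¹ = b * a⁻¹ * b := by
    have h := congrArg Inv.inv r1
    simpa [mul_inv_rev, mul_assoc] using h
  have r2' : A⁻¹ * b * A⁻¹ = b * A⁻¹ * b := by
    have h := congrArg Inv.inv r2
    simpa [mul_inv_rev, mul_assoc] using h
  have r3i : A⁻¹ * a⁻¹ = a⁻¹ * A⁻¹ := by
    have h := congrArg Inv.inv r3
    simpa [mul_inv_rev] using h
  -- key conjugation identities: a⁻¹ b a = b⁻¹ a⁻¹ b and A⁻¹ b A = b⁻¹ A⁻¹ b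
  have ha : a⁻¹ * b * a = b⁻¹ * a⁻¹ * b := by
    have h : b * (a⁻¹ * b * a) = b * (b⁻¹ * a⁻¹ * b) := by
      calc b * (a⁻¹ * b * a) = (b * a⁻¹ * b) * a := by group
        _ = (a⁻¹ * b * a⁻¹) * a := by rw [← r1']
        _ = b * (b⁻¹ * a⁻¹ * b) := by group
    exact mul_left_cancel h
  have hA : A⁻¹ * b * A = b⁻¹ * A⁻¹ * b := by
    have h : b * (A⁻¹ * b * A) = b * (b⁻¹ * A⁻¹ * b) := by
      calc b * (A⁻¹ * b * A) = (b * A⁻¹ * b) * A := by group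
        _ = (A⁻¹ * b * A⁻¹) * A := by rw [← r2']
        _ = b * (b⁻¹ * A⁻¹ * b) := by group
    exact mul_left_cancel h
  -- the conjugated twists commute
  have key : (a⁻¹ * b * a) * (b⁻¹ * A⁻¹ * b) = (b⁻¹ * A⁻¹ * b) * (a⁻¹ * b * a) := by
    rw [ha]
    calc b⁻¹ * a⁻¹ * b * (b⁻¹ * A⁻¹ * b) = b⁻¹ * (a⁻¹ * A⁻¹) * b := by group
      _ = b⁻¹ * (A⁻¹ * a⁻¹) * b := by rw [r3i]
      _ = b⁻¹ * A⁻¹ * b * (b⁻¹ * a⁻¹ * b) := by group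
  have h2 : (a⁻¹ * b * a) * (a⁻¹ * B * a) = (a⁻¹ * B * a) * (a⁻¹ * b * a) := by
    rw [r5, hA]; exact key
  have h3 := congrArg (fun g => a * g * a⁻¹) h2
  simp only [mul_assoc] at h3
  simpa [mul_assoc] using h3
end

section
/- In the pure mapping class group PMCG₂(T²) with generators a, A, b, B and relations a b̄ a = b̄ a b̄, A b̄ A = b̄ A b̄, aA = Aa, (b̄ a A)⁴ = 1, ā B a = Ā b A, define α₁ = aĀ, β₁ = bB̄, and s = α₁ ā b ā = Ā b ā. Then s⁴ = 1, s α₁ s⁻¹ = β₁, and s β₁ s⁻¹ = α₁⁻¹. -/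
/-- In any group with elements a, A, b, B satisfying the relations of the pure
mapping class group PMCG₂(T²), the elements α₁ = aA⁻¹, β₁ = bB⁻¹, and
s = α₁ a⁻¹ b a⁻¹ = A⁻¹ b a⁻¹ satisfy s⁴ = 1, s α₁ s⁻¹ = β₁, and s β₁ s⁻¹ = α₁⁻¹. -/
theorem pmcg_quarter_rotation {G : Type*} [Group G] (a A b B : G)
    (r1 : a * b⁻¹ * a = b⁻¹ * a * b⁻¹)
    (r2 : A * b⁻¹ * A = b⁻¹ * A * b⁻¹)
    (r3 : a * A = A * a)
    (r4 : (b⁻¹ * a * A) ^ 4 = 1)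
    (r5 : a⁻¹ * B * a = A⁻¹ * b * A) :
    let α₁ : G := a * A⁻¹
    let β₁ : G := b * B⁻¹
    let s : G := A⁻¹ * b * a⁻¹
    s = α₁ * a⁻¹ * b * a⁻¹ ∧ s ^ 4 = 1 ∧ s * α₁ * s⁻¹ = β₁ ∧ s * β₁ * s⁻¹ = α₁⁻¹ := by
  intro α₁ β₁ s
  -- derived commutation facts
  have c1 : a * A⁻¹ = A⁻¹ * a := by
    calc a * A⁻¹ = A⁻¹ * (A * a) * A⁻¹ := by group
      _ = A⁻¹ * (a * A) * A⁻¹ := by rw [← r3]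
      _ = A⁻¹ * a := by group
  have c2 : a⁻¹ * A = A * a⁻¹ := by
    calc a⁻¹ * A = a⁻¹ * (A * a) * a⁻¹ := by group
      _ = a⁻¹ * (a * A) * a⁻¹ := by rw [← r3]
      _ = A * a⁻¹ := by group
  -- inverse forms of braid relations
  have F2 : A⁻¹ * b * A⁻¹ = b * A⁻¹ * b := by
    calc A⁻¹ * b * A⁻¹ = (A * b⁻¹ * A)⁻¹ := by group
      _ = (b⁻¹ * A * b⁻¹)⁻¹ := by rw [r2]
      _ = b * A⁻¹ * b := by group
  have F3 : b * a * b⁻¹ = a * b⁻¹ * a⁻¹ := by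
    calc b * a * b⁻¹ = b * (a * b⁻¹ * a) * a⁻¹ * b * b⁻¹ := by group
      _ = b * (b⁻¹ * a * b⁻¹) * a⁻¹ * b * b⁻¹ := by rw [r1]
      _ = a * b⁻¹ * a⁻¹ := by group
  -- the expression for B⁻¹
  have F5 : B⁻¹ = a * A⁻¹ * b⁻¹ * A * a⁻¹ := by
    have h : a * (a⁻¹ * B * a) * a⁻¹ = a * (A⁻¹ * b * A) * a⁻¹ := by rw [r5]
    have hB : B = a * (A⁻¹ * b * A) * a⁻¹ := by
      calc B = a * (a⁻¹ * B * a) * a⁻¹ := by group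
        _ = a * (A⁻¹ * b * A) * a⁻¹ := h
    rw [hB]; group
  -- Goal 1 : s = α₁ * a⁻¹ * b * a⁻¹
  have g1 : s = α₁ * a⁻¹ * b * a⁻¹ := by
    show A⁻¹ * b * a⁻¹ = (a * A⁻¹) * a⁻¹ * b * a⁻¹
    rw [c1]; group
  -- Goal 2 : s ^ 4 = 1
  have g2 : s ^ 4 = 1 := by
    have hs : s⁻¹ = a * (b⁻¹ * a * A) * a⁻¹ := by
      show (A⁻¹ * b * a⁻¹)⁻¹ = a * (b⁻¹ * a * A) * a⁻¹
      calc (A⁻¹ * b * a⁻¹)⁻¹ = a * b⁻¹ * (A * a) * a⁻¹ := by group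
        _ = a * b⁻¹ * (a * A) * a⁻¹ := by rw [r3]
        _ = a * (b⁻¹ * a * A) * a⁻¹ := by group
    have h4 : (s⁻¹) ^ 4 = 1 := by
      rw [hs]
      calc (a * (b⁻¹ * a * A) * a⁻¹) ^ 4 = a * (b⁻¹ * a * A) ^ 4 * a⁻¹ := conj_pow ..
        _ = a * 1 * a⁻¹ := by rw [r4]
        _ = 1 := by group
    rw [inv_pow] at h4
    exact inv_eq_one.mp h4
  -- Goal 3 : s * α₁ * s⁻¹ = β₁
  have g3 : s * α₁ * s⁻¹ = β₁ := by
    show (A⁻¹ * b * a⁻¹) * (a * A⁻¹) * (A⁻¹ * b * a⁻¹)⁻¹ = b * B⁻¹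
    calc (A⁻¹ * b * a⁻¹) * (a * A⁻¹) * (A⁻¹ * b * a⁻¹)⁻¹
        = (A⁻¹ * b * A⁻¹) * a * b⁻¹ * A := by group
      _ = (b * A⁻¹ * b) * a * b⁻¹ * A := by rw [F2]
      _ = b * A⁻¹ * (b * a * b⁻¹) * A := by group
      _ = b * A⁻¹ * (a * b⁻¹ * a⁻¹) * A := by rw [F3]
      _ = b * ((A⁻¹ * a) * b⁻¹ * (a⁻¹ * A)) := by group
      _ = b * ((a * A⁻¹) * b⁻¹ * (A * a⁻¹)) := by rw [← c1, c2]
      _ = b * (a * A⁻¹ * b⁻¹ * A * a⁻¹) := by group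
      _ = b * B⁻¹ := by rw [← F5]
  -- Goal 4 : s * β₁ * s⁻¹ = α₁⁻¹
  have g4 : s * β₁ * s⁻¹ = α₁⁻¹ := by
    rw [← g3]
    show (A⁻¹ * b * a⁻¹) * ((A⁻¹ * b * a⁻¹) * (a * A⁻¹) * (A⁻¹ * b * a⁻¹)⁻¹) *
        (A⁻¹ * b * a⁻¹)⁻¹ = (a * A⁻¹)⁻¹
    calc (A⁻¹ * b * a⁻¹) * ((A⁻¹ * b * a⁻¹) * (a * A⁻¹) * (A⁻¹ * b * a⁻¹)⁻¹) *
        (A⁻¹ * b * a⁻¹)⁻¹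
        = A⁻¹ * b * a⁻¹ * (A⁻¹ * b * A⁻¹) * a * b⁻¹ * A * a * b⁻¹ * A := by group
      _ = A⁻¹ * b * a⁻¹ * (b * A⁻¹ * b) * a * b⁻¹ * A * a * b⁻¹ * A := by rw [F2]
      _ = A⁻¹ * b * a⁻¹ * b * A⁻¹ * (b * a * b⁻¹) * A * a * b⁻¹ * A := by group
      _ = A⁻¹ * b * a⁻¹ * b * A⁻¹ * (a * b⁻¹ * a⁻¹) * A * a * b⁻¹ * A := by rw [F3]
      _ = A⁻¹ * b * a⁻¹ * b * A⁻¹ * a * b⁻¹ * (a⁻¹ * A) * a * b⁻¹ * A := by group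
      _ = A⁻¹ * b * a⁻¹ * b * A⁻¹ * a * b⁻¹ * (A * a⁻¹) * a * b⁻¹ * A := by rw [c2]
      _ = A⁻¹ * b * a⁻¹ * b * A⁻¹ * a * (b⁻¹ * A * b⁻¹) * A := by group
      _ = A⁻¹ * b * a⁻¹ * b * A⁻¹ * a * (A * b⁻¹ * A) * A := by rw [← r2]
      _ = A⁻¹ * b * a⁻¹ * b * A⁻¹ * (a * A) * b⁻¹ * A * A := by group
      _ = A⁻¹ * b * a⁻¹ * b * A⁻¹ * (A * a) * b⁻¹ * A * A := by rw [r3]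
      _ = A⁻¹ * b * a⁻¹ * (b * a * b⁻¹) * A * A := by group
      _ = A⁻¹ * b * a⁻¹ * (a * b⁻¹ * a⁻¹) * A * A := by rw [F3]
      _ = A⁻¹ * (a⁻¹ * A) * A := by group
      _ = A⁻¹ * (A * a⁻¹) * A := by rw [c2]
      _ = (a⁻¹ * A) := by group
      _ = (A * a⁻¹) := by rw [c2]
      _ = (a * A⁻¹)⁻¹ := by group
  exact ⟨g1, g2, g3, g4⟩
end

section
/- Let A = cos χ·1 + sin χ·k, B = 1, a = cos ψ·i + sin ψ·k, and b = a⁻¹ in SU(2), with χ ∈ (0, π) and ψ ∈ (−π/2, π/2). Then (A, B, a, b) satisfies [A,B]·a·b = 1, a and b are traceless, and the subgroup generated by {A, B, a, b} is nonabelian (i.e. the representation is irreducible). -/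
open Real Quaternion

/-!
Since `B = 1` the commutator `[A, B]` is trivial, so only `A ≠ 0` and `a ≠ 0` matter for the relation.
The `j`-component of `A a - a A` is `2 sin χ cos ψ`, which is nonzero for `χ ∈ (0, π)` and
`ψ ∈ (-π/2, π/2)`; hence `A` and `a` do not commute.
-/

namespace Quaternion

theorem re_inv {R : Type*} [Field R] [LinearOrder R] [IsStrictOrderedRing R] (q : ℍ[R]) :
    q⁻¹.re = (normSq q)⁻¹ * q.re := by
  simp [inv_def]

variable {R : Type*} [CommRing R]

theorem imJ_mul_sub_imJ_mul_swap (x y : ℍ[R]) :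
    (x * y).imJ - (y * x).imJ = 2 * (x.imK * y.imI - x.imI * y.imK) := by
  simp only [imJ_mul]
  ring

theorem mul_ne_mul_swap_of_imK_mul_imI_ne [NoZeroDivisors R] [CharZero R] {x y : ℍ[R]}
    (h : x.imK * y.imI ≠ x.imI * y.imK) : x * y ≠ y * x := by
  intro hxy
  have := imJ_mul_sub_imJ_mul_swap x y
  rw [hxy, sub_self, eq_comm, mul_eq_zero] at this
  exact this.elim two_ne_zero (sub_ne_zero.2 h)

end Quaternion

/-- A point of the unperturbed Lagrangian W₀: with A = cos χ·1 + sin χ·k, B = 1,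
a = cos ψ·i + sin ψ·k, b = a⁻¹ in the unit quaternions (χ ∈ (0,π),
ψ ∈ (−π/2, π/2)), the quadruple satisfies [A,B]·a·b = 1, a and b are traceless,
and the representation is irreducible: the subgroup generated by {A,B,a,b} is
nonabelian, i.e. some pair of the generators fails to commute. -/
theorem W0_point_irreducible (χ ψ : ℝ) (hχ : χ ∈ Set.Ioo 0 Real.pi)
    (hψ : ψ ∈ Set.Ioo (-(Real.pi / 2)) (Real.pi / 2)) :
    let A : ℍ[ℝ] := ⟨Real.cos χ, 0, 0, Real.sin χ⟩
    let B : ℍ[ℝ] := 1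
    let a : ℍ[ℝ] := ⟨0, Real.cos ψ, 0, Real.sin ψ⟩
    let b : ℍ[ℝ] := a⁻¹
    (A * B * A⁻¹ * B⁻¹) * a * b = 1 ∧ a.re = 0 ∧ b.re = 0 ∧
      ∃ g ∈ ({A, B, a, b} : Set ℍ[ℝ]), ∃ h ∈ ({A, B, a, b} : Set ℍ[ℝ]),
        g * h ≠ h * g := by
  intro A B a b
  have hsin : Real.sin χ ≠ 0 := (Real.sin_pos_of_pos_of_lt_pi hχ.1 hχ.2).ne'
  have hcos : Real.cos ψ ≠ 0 := (Real.cos_pos_of_mem_Ioo hψ).ne'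
  have hA : A ≠ 0 := ne_of_apply_ne QuaternionAlgebra.imK hsin
  have ha : a ≠ 0 := ne_of_apply_ne QuaternionAlgebra.imI hcos
  refine ⟨?_, rfl, (re_inv a).trans (mul_eq_zero_of_right _ rfl), A, by simp, a, by simp, ?_⟩
  · simp [B, b, mul_inv_cancel₀ hA, mul_inv_cancel₀ ha]
  · exact mul_ne_mul_swap_of_imK_mul_imI_ne (by simpa [A, a] using ⟨hsin, hcos⟩)
end
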